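/- arXiv:2509.01216 — 2 statements merged into one kernel-verified Lean document; each statement's English description precedes it below -/
import Mathlib

section
/- For every integer n ≥ 1, p̄(n) − 2p̄(n−1) ≤ 0, with strict inequality for n ≥ 4. -/
/-- An overpartition of `n`: non-overlined parts with multiplicities given by `count`,
overlined parts given by the finite set `over` (each value overlined at most once). -/
structure Overpartition (n : ℕ) where
  count : ℕ →₀ ℕ
  overlined : Finset ℕ
  count_zero : count 0 = 0
  zero_not_over : 0 ∉ overlined
  weight : (count.sum fun k m => k * m) + ∑ k ∈ overlined, k = n

/-- The number of overpartitions of `n`. -/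
noncomputable def pbar (n : ℕ) : ℕ := Nat.card (Overpartition n)

/-- `pbar` extended to the integers by `0` on negatives. -/
noncomputable def pbarZ (m : ℤ) : ℕ := if m < 0 then 0 else pbar m.toNat

/-- The smallest odd positive integer that is not a non-overlined part. -/
noncomputable def mex21 {n : ℕ} (π : Overpartition n) : ℕ := sInf {m : ℕ | m % 2 = 1 ∧ π.count m = 0}

/-- The number of overpartitions `π` of `n` with `mex21 π ≥ 2k+1` and
`mex21 π ≡ 2k+1 (mod 4)`. -/
noncomputable def op21 (n k : ℕ) : ℕ :=
  Nat.card {π : Overpartition n // 2 * k + 1 ≤ mex21 π ∧ mex21 π % 4 = (2 * k + 1) % 4}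

/-- Total number of occurrences of the value `p` (overlined or not) in `π`. -/
noncomputable def multTotal {n : ℕ} (π : Overpartition n) (p : ℕ) : ℕ :=
  π.count p + if p ∈ π.overlined then 1 else 0

/-! ### auxiliary machinery -/

lemma Overpartition.ext' {n : ℕ} {π π' : Overpartition n}
    (h1 : π.count = π'.count) (h2 : π.overlined = π'.overlined) : π = π' := by
  cases π; cases π'; simp_all

lemma wf (c : ℕ →₀ ℕ) : ∀ a : ℕ, a * (0:ℕ) = 0 := by simp

/-- sum of `fun k m => k * m` splits over +. -/
lemma sum_add' (c d : ℕ →₀ ℕ) :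
    ((c + d).sum fun k m => k * m) = (c.sum fun k m => k * m) + (d.sum fun k m => k * m) :=
  Finsupp.sum_add_index' (by simp) (by intros; ring)

lemma sum_single' (k v : ℕ) :
    ((Finsupp.single k v).sum fun k m => k * m) = k * v :=
  Finsupp.sum_single_index (by simp)

lemma decompose (c : ℕ →₀ ℕ) (k : ℕ) (v : ℕ) (hv : v ≤ c k) :
    c = c.update k (c k - v) + Finsupp.single k v := by
  ext a
  by_cases h : a = k
  · subst h
    simp [Finsupp.coe_update]
    omega
  · simp [Finsupp.coe_update, Function.update_of_ne h, Finsupp.single_apply, Ne.symm h]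

lemma sum_update_sub (c : ℕ →₀ ℕ) (k v : ℕ) (hv : v ≤ c k) :
    ((c.update k (c k - v)).sum fun k m => k * m) + k * v = c.sum fun k m => k * m := by
  conv_rhs => rw [decompose c k v hv]
  rw [sum_add', sum_single']

/-- the count bound: `k * c k ≤ sum`. -/
lemma mul_le_sum (c : ℕ →₀ ℕ) (k : ℕ) : k * c k ≤ c.sum fun k m => k * m := by
  by_cases h : k ∈ c.support
  · exact Finset.single_le_sum (f := fun a => a * c a) (fun i _ => Nat.zero_le _) h
  · simp [Finsupp.notMem_support_iff.mp h]

lemma count_le {n : ℕ} (π : Overpartition n) (k : ℕ) : k * π.count k ≤ n := by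
  have := mul_le_sum π.count k
  have := π.weight
  omega

lemma over_le {n : ℕ} (π : Overpartition n) {k : ℕ} (hk : k ∈ π.overlined) : k ≤ n := by
  have : k ≤ ∑ j ∈ π.overlined, j := Finset.single_le_sum (f := fun j => j) (fun i _ => Nat.zero_le _) hk
  have := π.weight
  omega

instance overpartitionFinite (n : ℕ) : Finite (Overpartition n) := by
  classical
  let f : Overpartition n → (Fin (n+1) → Fin (n+1)) × Finset (Fin (n+1)) :=
    fun π => (fun k => ⟨π.count k, by
        have h := count_le π k
        rcases Nat.eq_zero_or_pos (k : ℕ) with h0 | h0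
        · have : (k:ℕ) = 0 := h0
          rw [this, π.count_zero]; omega
        · nlinarith [h0]⟩,
      Finset.univ.filter (fun k : Fin (n+1) => (k : ℕ) ∈ π.overlined))
  have hf : Function.Injective f := by
    intro π π' h
    obtain ⟨h1, h2⟩ := Prod.mk.injEq .. ▸ h
    apply Overpartition.ext'
    · ext a
      by_cases ha : a ≤ n
      · have := congrFun h1 ⟨a, by omega⟩
        simpa using congrArg Fin.val this
      · have c1 : π.count a = 0 := by
          have := count_le π a; by_contra hc; nlinarith [Nat.pos_of_ne_zero hc]
        have c2 : π'.count a = 0 := by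
          have := count_le π' a; by_contra hc; nlinarith [Nat.pos_of_ne_zero hc]
        rw [c1, c2]
    · ext a
      constructor
      · intro ha
        have hle := over_le π ha
        have : (⟨a, by omega⟩ : Fin (n+1)) ∈ Finset.univ.filter (fun k : Fin (n+1) => (k : ℕ) ∈ π'.overlined) := by
          rw [← h2]; simp [ha]
        simpa using this
      · intro ha
        have hle := over_le π' ha
        have : (⟨a, by omega⟩ : Fin (n+1)) ∈ Finset.univ.filter (fun k : Fin (n+1) => (k : ℕ) ∈ π.overlined) := by
          rw [h2]; simp [ha]
        simpa using this
  exact Finite.of_injective f hf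

/-! ### the injection -/

section Injection
variable {m : ℕ}

/-- set of parts -/
def partSet {n : ℕ} (π : Overpartition n) : Set ℕ := {k | π.count k ≠ 0 ∨ k ∈ π.overlined}

noncomputable def minPart {n : ℕ} (π : Overpartition n) : ℕ := sInf (partSet π)

lemma partSet_nonempty (π : Overpartition (m+1)) : (partSet π).Nonempty := by
  by_contra h
  rw [Set.not_nonempty_iff_eq_empty] at h
  have hc : π.count = 0 := by
    ext a
    by_contra hc
    have : a ∈ partSet π := Or.inl hc
    simp [h] at this
  have ho : π.overlined = ∅ := by
    ext a
    simp only [Finset.notMem_empty, iff_false]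
    intro ha
    have : a ∈ partSet π := Or.inr ha
    simp [h] at this
  have := π.weight
  rw [hc, ho] at this
  simp at this

lemma minPart_mem (π : Overpartition (m+1)) : minPart π ∈ partSet π :=
  Nat.sInf_mem (partSet_nonempty π)

lemma minPart_le (π : Overpartition (m+1)) {k : ℕ} (hk : k ∈ partSet π) : minPart π ≤ k :=
  Nat.sInf_le hk

lemma minPart_two_le (π : Overpartition (m+1)) (h1 : π.count 1 = 0) (h2 : 1 ∉ π.overlined) :
    2 ≤ minPart π := by
  have hmem := minPart_mem π
  rcases Nat.lt_or_ge (minPart π) 2 with h | h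
  · interval_cases h' : minPart π
    · rcases hmem with h' | h'
      · exact absurd π.count_zero h'
      · exact absurd h' π.zero_not_over
    · rcases hmem with h' | h'
      · exact absurd h1 h'
      · exact absurd h' h2
  · exact h

/-- Case 1: remove one non-overlined 1. -/
noncomputable def F1 (π : Overpartition (m+1)) (h : π.count 1 ≠ 0) : Overpartition m where
  count := π.count.update 1 (π.count 1 - 1)
  overlined := π.overlined
  count_zero := by
    classical
    simp [Finsupp.coe_update, Function.update_of_ne, π.count_zero]
  zero_not_over := π.zero_not_over
  weight := by
    have h1 := sum_update_sub π.count 1 1 (by omega)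
    have h2 := π.weight
    omega

/-- Case 2: remove the overlined 1. -/
noncomputable def F2 (π : Overpartition (m+1)) (h2 : 1 ∈ π.overlined) : Overpartition m where
  count := π.count
  overlined := π.overlined.erase 1
  count_zero := π.count_zero
  zero_not_over := fun h => π.zero_not_over (Finset.mem_of_mem_erase h)
  weight := by
    have h1 : ∑ k ∈ π.overlined.erase 1, k + 1 = ∑ k ∈ π.overlined, k := Finset.sum_erase_add π.overlined _ h2
    have h2 := π.weight
    omega

/-- Case 3a: min part `p ≥ 2` is overlined; replace it by an overlined 1 and `p-2` ones. -/
noncomputable def F3a (π : Overpartition (m+1)) (h1 : π.count 1 = 0) (h2 : 1 ∉ π.overlined)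
    (hp : minPart π ∈ π.overlined) : Overpartition m where
  count := π.count + Finsupp.single 1 (minPart π - 2)
  overlined := insert 1 (π.overlined.erase (minPart π))
  count_zero := by simp [π.count_zero, Finsupp.single_apply]
  zero_not_over := by
    simp only [Finset.mem_insert]
    push_neg
    exact ⟨by omega, fun h => π.zero_not_over (Finset.mem_of_mem_erase h)⟩
  weight := by
    have hp2 : 2 ≤ minPart π := minPart_two_le π h1 h2
    have e1 : (π.count + Finsupp.single 1 (minPart π - 2)).sum (fun k m => k * m)
        = π.count.sum (fun k m => k * m) + (minPart π - 2) := by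
      rw [sum_add', sum_single']; ring_nf
    have e2 : ∑ k ∈ insert 1 (π.overlined.erase (minPart π)), k
        = 1 + ∑ k ∈ π.overlined.erase (minPart π), k := by
      rw [Finset.sum_insert (by simp [h2])]
    have e3 : ∑ k ∈ π.overlined.erase (minPart π), k + minPart π = ∑ k ∈ π.overlined, k :=
      Finset.sum_erase_add π.overlined _ hp
    have e4 := π.weight
    omega

/-- Case 3b: min part `p ≥ 2` is not overlined; remove one copy, add `p-1` ones. -/
noncomputable def F3b (π : Overpartition (m+1)) (h1 : π.count 1 = 0) (h2 : 1 ∉ π.overlined)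
    (hp : π.count (minPart π) ≠ 0) : Overpartition m where
  count := π.count.update (minPart π) (π.count (minPart π) - 1) + Finsupp.single 1 (minPart π - 1)
  overlined := π.overlined
  count_zero := by
    classical
    have hp2 : 2 ≤ minPart π := minPart_two_le π h1 h2
    simp [Finsupp.coe_update, Function.update_of_ne (by omega : (0:ℕ) ≠ minPart π),
      π.count_zero, Finsupp.single_apply]
  zero_not_over := π.zero_not_over
  weight := by
    have hp2 : 2 ≤ minPart π := minPart_two_le π h1 h2
    have e1 := sum_update_sub π.count (minPart π) 1 (by omega)
    have e2 : (π.count.update (minPart π) (π.count (minPart π) - 1)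
        + Finsupp.single 1 (minPart π - 1)).sum (fun k m => k * m)
        = (π.count.update (minPart π) (π.count (minPart π) - 1)).sum (fun k m => k * m)
          + (minPart π - 1) := by
      rw [sum_add', sum_single']; ring_nf
    have e4 := π.weight
    omega

open Classical in
noncomputable def Fmap (π : Overpartition (m+1)) : Overpartition m × Bool :=
  if h : π.count 1 ≠ 0 then (F1 π h, false)
  else if h2 : 1 ∈ π.overlined then (F2 π h2, true)
  else if hp : minPart π ∈ π.overlined then (F3a π (not_not.mp h) h2 hp, true)
  else (F3b π (not_not.mp h) h2 (by
    rcases minPart_mem π with h' | h'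
    · exact h'
    · exact absurd h' hp), true)


/-! ### invariants of the image -/

lemma F2_count1 (π : Overpartition (m+1)) (h2 : 1 ∈ π.overlined) : (F2 π h2).count 1 = π.count 1 := rfl

lemma F2_over1 (π : Overpartition (m+1)) (h2 : 1 ∈ π.overlined) : 1 ∉ (F2 π h2).overlined :=
  Finset.notMem_erase _ _

lemma F3a_count1 (π : Overpartition (m+1)) (h1 : π.count 1 = 0) (h2 : 1 ∉ π.overlined)
    (hp : minPart π ∈ π.overlined) : (F3a π h1 h2 hp).count 1 = minPart π - 2 := by
  show π.count 1 + _ = _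
  rw [h1, Finsupp.single_apply]
  simp

lemma F3a_over1 (π : Overpartition (m+1)) (h1 : π.count 1 = 0) (h2 : 1 ∉ π.overlined)
    (hp : minPart π ∈ π.overlined) : 1 ∈ (F3a π h1 h2 hp).overlined :=
  Finset.mem_insert_self _ _

lemma F3b_count1 (π : Overpartition (m+1)) (h1 : π.count 1 = 0) (h2 : 1 ∉ π.overlined)
    (hp : π.count (minPart π) ≠ 0) : (F3b π h1 h2 hp).count 1 = minPart π - 1 := by
  have hp2 : 2 ≤ minPart π := minPart_two_le π h1 h2
  show (π.count.update (minPart π) _) 1 + (Finsupp.single 1 (minPart π - 1)) 1 = _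
  rw [Finsupp.coe_update, Function.update_of_ne (by omega : (1:ℕ) ≠ minPart π), h1,
    Finsupp.single_apply]
  simp

lemma F3b_over1 (π : Overpartition (m+1)) (h1 : π.count 1 = 0) (h2 : 1 ∉ π.overlined)
    (hp : π.count (minPart π) ≠ 0) : 1 ∉ (F3b π h1 h2 hp).overlined := h2

lemma update_pred_inj {c c' : ℕ →₀ ℕ} {k : ℕ} (hc : c k ≠ 0) (hc' : c' k ≠ 0)
    (h : c.update k (c k - 1) = c'.update k (c' k - 1)) : c = c' := by
  classical
  ext a
  have ha := DFunLike.congr_fun h a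
  by_cases hak : a = k
  · subst hak
    simp only [Finsupp.coe_update, Function.update_self] at ha
    omega
  · simpa [Finsupp.coe_update, Function.update_of_ne hak] using ha

lemma Fmap_cases (π : Overpartition (m+1)) :
    (∃ h, Fmap π = (F1 π h, false)) ∨
    (∃ (h1 : π.count 1 = 0) (h2 : 1 ∈ π.overlined), Fmap π = (F2 π h2, true)) ∨
    (∃ (h1 : π.count 1 = 0) (h2 : 1 ∉ π.overlined) (h3 : minPart π ∈ π.overlined),
        Fmap π = (F3a π h1 h2 h3, true)) ∨
    (∃ (h1 : π.count 1 = 0) (h2 : 1 ∉ π.overlined) (hp : π.count (minPart π) ≠ 0),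
        Fmap π = (F3b π h1 h2 hp, true) ∧ minPart π ∉ π.overlined) := by
  by_cases h1 : π.count 1 ≠ 0
  · exact Or.inl ⟨h1, by unfold Fmap; rw [dif_pos h1]⟩
  · by_cases h2 : 1 ∈ π.overlined
    · exact Or.inr (Or.inl ⟨not_not.mp h1, h2, by unfold Fmap; rw [dif_neg h1, dif_pos h2]⟩)
    · by_cases h3 : minPart π ∈ π.overlined
      · exact Or.inr (Or.inr (Or.inl ⟨not_not.mp h1, h2, h3, by
          unfold Fmap; rw [dif_neg h1, dif_neg h2, dif_pos h3]⟩))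
      · have hp : π.count (minPart π) ≠ 0 := by
          rcases minPart_mem π with h' | h'
          · exact h'
          · exact absurd h' h3
        exact Or.inr (Or.inr (Or.inr ⟨not_not.mp h1, h2, hp, by
          unfold Fmap; rw [dif_neg h1, dif_neg h2, dif_neg h3], h3⟩))

theorem Fmap_inj : Function.Injective (Fmap (m := m)) := by
  intro π π' h
  rcases Fmap_cases π with ⟨a1, e⟩ | ⟨a1, a2, e⟩ | ⟨a1, a2, a3, e⟩ | ⟨a1, a2, a3, e, a4⟩ <;>
    rcases Fmap_cases π' with ⟨b1, e'⟩ | ⟨b1, b2, e'⟩ | ⟨b1, b2, b3, e'⟩ | ⟨b1, b2, b3, e', b4⟩ <;>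
      rw [e, e'] at h <;> rw [Prod.mk.injEq] at h <;> obtain ⟨hσ, hb⟩ := h <;>
        try simp at hb
  · -- (1,1)
    have hc : (F1 π a1).count = (F1 π' b1).count := by rw [hσ]
    have ho : (F1 π a1).overlined = (F1 π' b1).overlined := by rw [hσ]
    exact Overpartition.ext' (update_pred_inj a1 b1 hc) ho
  · -- (2,2)
    have hc : (F2 π a2).count = (F2 π' b2).count := by rw [hσ]
    have ho : π.overlined.erase 1 = π'.overlined.erase 1 := by
      show (F2 π a2).overlined = (F2 π' b2).overlined; rw [hσ]
    refine Overpartition.ext' hc ?_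
    rw [← Finset.insert_erase a2, ← Finset.insert_erase b2, ho]
  · -- (2,3a)
    exact absurd (show (1:ℕ) ∈ (F2 π a2).overlined by
      rw [hσ]; exact F3a_over1 π' b1 b2 b3) (F2_over1 π a2)
  · -- (2,3b)
    exfalso
    have e1 : (F2 π a2).count 1 = (F3b π' b1 b2 b3).count 1 := by rw [hσ]
    rw [F2_count1, F3b_count1] at e1
    have := minPart_two_le π' b1 b2
    omega
  · -- (3a,2)
    exact absurd (show (1:ℕ) ∈ (F2 π' b2).overlined by
      rw [← hσ]; exact F3a_over1 π a1 a2 a3) (F2_over1 π' b2)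
  · -- (3a,3a)
    have hc : π.count + Finsupp.single 1 (minPart π - 2)
        = π'.count + Finsupp.single 1 (minPart π' - 2) := by
      show (F3a π a1 a2 a3).count = (F3a π' b1 b2 b3).count; rw [hσ]
    have hpq : minPart π = minPart π' := by
      have e1 := DFunLike.congr_fun hc 1
      simp [Finsupp.single_apply, a1, b1] at e1
      have := minPart_two_le π a1 a2
      have := minPart_two_le π' b1 b2
      omega
    rw [hpq] at hc
    refine Overpartition.ext' (add_right_cancel hc) ?_
    have ho : insert 1 (π.overlined.erase (minPart π)) = insert 1 (π'.overlined.erase (minPart π')) := by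
      show (F3a π a1 a2 a3).overlined = (F3a π' b1 b2 b3).overlined; rw [hσ]
    have a1' : 1 ∉ π.overlined.erase (minPart π) := fun hh => a2 (Finset.mem_of_mem_erase hh)
    have b1' : 1 ∉ π'.overlined.erase (minPart π') := fun hh => b2 (Finset.mem_of_mem_erase hh)
    have he : π.overlined.erase (minPart π) = π'.overlined.erase (minPart π') := by
      rw [← Finset.erase_insert a1', ho, Finset.erase_insert b1']
    rw [hpq] at he a3
    rw [← Finset.insert_erase a3, ← Finset.insert_erase b3, he]
  · -- (3a,3b)
    exact absurd (show (1:ℕ) ∈ (F3b π' b1 b2 b3).overlined by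
      rw [← hσ]; exact F3a_over1 π a1 a2 a3) (F3b_over1 π' b1 b2 b3)
  · -- (3b,2)
    exfalso
    have e1 : (F3b π a1 a2 a3).count 1 = (F2 π' b2).count 1 := by rw [hσ]
    rw [F2_count1, F3b_count1] at e1
    have := minPart_two_le π a1 a2
    omega
  · -- (3b,3a)
    exact absurd (show (1:ℕ) ∈ (F3b π a1 a2 a3).overlined by
      rw [hσ]; exact F3a_over1 π' b1 b2 b3) (F3b_over1 π a1 a2 a3)
  · -- (3b,3b)
    have hpq : minPart π = minPart π' := by
      have e1 : (F3b π a1 a2 a3).count 1 = (F3b π' b1 b2 b3).count 1 := by rw [hσ]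
      rw [F3b_count1, F3b_count1] at e1
      have := minPart_two_le π a1 a2
      have := minPart_two_le π' b1 b2
      omega
    have ho : (F3b π a1 a2 a3).overlined = (F3b π' b1 b2 b3).overlined := by rw [hσ]
    have hc : π.count.update (minPart π) (π.count (minPart π) - 1)
          + Finsupp.single 1 (minPart π - 1)
        = π'.count.update (minPart π') (π'.count (minPart π') - 1)
          + Finsupp.single 1 (minPart π' - 1) := by
      show (F3b π a1 a2 a3).count = (F3b π' b1 b2 b3).count; rw [hσ]
    rw [hpq] at hc a3
    have hc2 := add_right_cancel hc
    exact Overpartition.ext' (update_pred_inj a3 b3 hc2) ho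

end Injection
/-! ### the missed element -/

noncomputable def sigmaStar (m : ℕ) (hm : 3 ≤ m) : Overpartition m where
  count := Finsupp.single 1 1 + Finsupp.single (m-3) (if m-3 = 0 then 0 else 1)
  overlined := {2}
  count_zero := by
    simp only [Finsupp.add_apply, Finsupp.single_apply]
    by_cases h : m - 3 = 0 <;> simp [h]
  zero_not_over := by simp
  weight := by
    rw [sum_add', sum_single', sum_single']
    have : ∑ k ∈ ({2} : Finset ℕ), k = 2 := by simp
    rw [this]
    split_ifs with h <;> omega

lemma sigmaStar_count1 (m : ℕ) (hm : 3 ≤ m) : (sigmaStar m hm).count 1 ≠ 0 := by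
  simp [sigmaStar, Finsupp.single_apply]

lemma sigmaStar_not_mem_range (m : ℕ) (hm : 3 ≤ m) :
    (sigmaStar m hm, true) ∉ Set.range (Fmap (m := m)) := by
  rintro ⟨π, hπ⟩
  rcases Fmap_cases π with ⟨a1, e⟩ | ⟨a1, a2, e⟩ | ⟨a1, a2, a3, e⟩ | ⟨a1, a2, a3, e, a4⟩ <;>
    rw [e] at hπ <;> rw [Prod.mk.injEq] at hπ <;> obtain ⟨hσ, hb⟩ := hπ <;> try simp at hb
  · -- case 2
    have e1 : (F2 π a2).count 1 = (sigmaStar m hm).count 1 := by rw [hσ]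
    rw [F2_count1, a1] at e1
    exact sigmaStar_count1 m hm e1.symm
  · -- case 3a
    have e1 : (1:ℕ) ∈ (sigmaStar m hm).overlined := by
      rw [← hσ]; exact F3a_over1 π a1 a2 a3
    simp [sigmaStar] at e1
  · -- case 3b
    have e1 : π.overlined = ({2} : Finset ℕ) := by
      show (F3b π a1 a2 a3).overlined = (sigmaStar m hm).overlined; rw [hσ]
    have h2 : (2:ℕ) ∈ π.overlined := by rw [e1]; simp
    have hle : minPart π ≤ 2 := minPart_le π (Or.inr h2)
    have hge : 2 ≤ minPart π := minPart_two_le π a1 a2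
    have : minPart π = 2 := le_antisymm hle hge
    exact a4 (this ▸ h2)

/-! ### cardinality conclusions -/

lemma pbar_step_le (m : ℕ) : pbar (m+1) ≤ 2 * pbar m := by
  have h := Nat.card_le_card_of_injective (Fmap (m := m)) Fmap_inj
  rw [Nat.card_prod] at h
  have hb : Nat.card Bool = 2 := Nat.card_eq_fintype_card.trans (by simp)
  rw [hb] at h
  unfold pbar
  omega

lemma pbar_step_lt (m : ℕ) (hm : 3 ≤ m) : pbar (m+1) < 2 * pbar m := by
  letI : Fintype (Overpartition (m+1)) := Fintype.ofFinite _
  letI : Fintype (Overpartition m) := Fintype.ofFinite _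
  have h := Fintype.card_lt_of_injective_of_notMem (Fmap (m := m)) Fmap_inj
    (sigmaStar_not_mem_range m hm)
  rw [Fintype.card_prod, Fintype.card_bool] at h
  unfold pbar
  rw [Nat.card_eq_fintype_card, Nat.card_eq_fintype_card]
  omega

theorem pbar_sub_two_pbar_nonpos (n : ℕ) (hn : 1 ≤ n) :
    (pbar n : ℤ) - 2 * pbar (n - 1) ≤ 0 ∧
      (4 ≤ n → (pbar n : ℤ) - 2 * pbar (n - 1) < 0) := by
  obtain ⟨m, rfl⟩ : ∃ m, n = m + 1 := ⟨n - 1, by omega⟩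
  simp only [Nat.add_sub_cancel]
  constructor
  · have := pbar_step_le m
    push_cast
    omega
  · intro h4
    have := pbar_step_lt m (by omega)
    push_cast
    omega
end

section
/- For every integer k ≥ 1, as an identity of formal power series in q: (1 − q^k) ∑_{j≥0} q^{k(k+j)} (−q^{k+j+1}; q)_∞ / (q^{k+j}; q)_∞ − (1 + q^k) ∑_{j≥0} q^{(k+1)(k+j+1)} (−q^{k+j+2}; q)_∞ / (q^{k+j+1}; q)_∞ = (1 − q^{2k}) ∑_{j≥0} q^{k(k+j)} (−q^{k+j+1}; q)_∞ / (q^{k+j+1}; q)_∞. -/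
open Finset Filter

/-- The infinite q-Pochhammer symbol `(a; q)_∞ = ∏_{i ≥ 0} (1 - a qⁱ)`. -/
noncomputable def qPochInf (a q : ℝ) : ℝ := ∏' i : ℕ, (1 - a * q ^ i)

/-- The finite q-Pochhammer symbol `(a; q)_m = ∏_{i=0}^{m-1} (1 - a qⁱ)`. -/
noncomputable def qPoch (a q : ℝ) (m : ℕ) : ℝ := ∏ i ∈ Finset.range m, (1 - a * q ^ i)

lemma log_one_add_abs_le {x c : ℝ} (hx : |x| ≤ c) (hc : c < 1) :
    |Real.log (1 + x)| ≤ |x| / (1 - c) := by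
  have hx1 := (abs_le.1 hx).1
  have hx2 := (abs_le.1 hx).2
  have hc0 : 0 ≤ c := (abs_nonneg x).trans hx
  have h1 : (0:ℝ) < 1 - c := by linarith
  have hpos : 0 < 1 + x := by linarith
  rw [abs_le]
  constructor
  · have h2 : Real.log (1 + x)⁻¹ ≤ (1 + x)⁻¹ - 1 := Real.log_le_sub_one_of_pos (by positivity)
    rw [Real.log_inv] at h2
    have h3 : (1 + x)⁻¹ - 1 ≤ |x| / (1 - c) := by
      rw [inv_eq_one_div]
      have h4 : 1/(1+x) - 1 = (-x) / (1 + x) := by field_simp; ring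
      rw [h4]
      exact div_le_div₀ (abs_nonneg x) (neg_le_abs x) h1 (by linarith)
    linarith
  · have h2 : Real.log (1 + x) ≤ x := by
      have := Real.log_le_sub_one_of_pos hpos; linarith
    have h6 : x ≤ |x| / (1 - c) := by
      have h5 : |x| ≤ |x| / (1 - c) := by
        rw [le_div_iff₀ h1]; nlinarith [abs_nonneg x]
      linarith [le_abs_self x]
    linarith

section Main

variable {q : ℝ}

lemma factor_pos (hq : |q| < 1) {a : ℝ} (ha : |a| < 1) (i : ℕ) : 0 < 1 - a * q ^ i := by
  have h1 : |a * q ^ i| < 1 := by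
    rw [abs_mul, abs_pow]
    calc |a| * |q| ^ i ≤ |a| * 1 :=
          mul_le_mul_of_nonneg_left (pow_le_one₀ (abs_nonneg q) hq.le) (abs_nonneg a)
      _ = |a| := mul_one _
      _ < 1 := ha
  have := (abs_lt.1 h1).2
  linarith

lemma summable_log_q (hq : |q| < 1) {a : ℝ} (ha : |a| ≤ |q|) :
    Summable fun i : ℕ => Real.log (1 - a * q ^ i) := by
  apply Summable.of_norm_bounded (g := fun i => (1 - |q|)⁻¹ * |q| ^ i)
    ((summable_geometric_of_lt_one (abs_nonneg q) hq).mul_left _)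
  intro i
  have hxa : |(-(a * q ^ i))| ≤ |q| := by
    rw [abs_neg, abs_mul, abs_pow]
    calc |a| * |q| ^ i ≤ |q| * 1 :=
          mul_le_mul ha (pow_le_one₀ (abs_nonneg q) hq.le) (by positivity) (abs_nonneg q)
      _ = |q| := mul_one _
  have heq : (1 : ℝ) - a * q ^ i = 1 + -(a * q ^ i) := by ring
  calc ‖Real.log (1 - a * q ^ i)‖ = |Real.log (1 + -(a * q ^ i))| := by rw [heq]; rfl
    _ ≤ |(-(a * q ^ i))| / (1 - |q|) := log_one_add_abs_le hxa hq
    _ ≤ |q| ^ i / (1 - |q|) := by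
        apply div_le_div₀ (by positivity) ?_ (by linarith) le_rfl
        rw [abs_neg, abs_mul, abs_pow]
        calc |a| * |q| ^ i ≤ 1 * |q| ^ i :=
              mul_le_mul_of_nonneg_right (ha.trans hq.le) (by positivity)
          _ = |q| ^ i := one_mul _
    _ = (1 - |q|)⁻¹ * |q| ^ i := by rw [div_eq_inv_mul]

lemma qPochInf_exp (hq : |q| < 1) {a : ℝ} (ha : |a| ≤ |q|) :
    qPochInf a q = Real.exp (∑' i : ℕ, Real.log (1 - a * q ^ i)) := by
  have := Real.rexp_tsum_eq_tprod (f := fun i : ℕ => 1 - a * q ^ i)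
    (fun i => factor_pos hq (lt_of_le_of_lt ha hq) i) (summable_log_q hq ha)
  exact this.symm

lemma multipliable_q (hq : |q| < 1) {a : ℝ} (ha : |a| ≤ |q|) :
    Multipliable fun i : ℕ => 1 - a * q ^ i :=
  Real.multipliable_of_summable_log
    (fun i => factor_pos hq (lt_of_le_of_lt ha hq) i) (summable_log_q hq ha)

set_option maxHeartbeats 1000000 in
lemma qPochInf_split (hq : |q| < 1) {a : ℝ} (ha : |a| ≤ |q|) :
    qPochInf a q = (1 - a) * qPochInf (a * q) q := by
  have ha' : |a * q| ≤ |q| := by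
    rw [abs_mul]
    calc |a| * |q| ≤ 1 * |q| := mul_le_mul_of_nonneg_right (ha.trans hq.le) (abs_nonneg q)
      _ = |q| := one_mul _
  have hm : Multipliable fun i : ℕ => 1 - a * q ^ (i + 1) := by
    have he : (fun i : ℕ => 1 - a * q ^ (i + 1)) = fun i : ℕ => 1 - a * q * q ^ i := by
      funext i; rw [pow_succ]; ring
    rw [he]; exact multipliable_q hq ha'
  rw [qPochInf, tprod_eq_zero_mul' hm]
  simp only [pow_zero, mul_one]
  congr 1
  rw [qPochInf]
  exact tprod_congr fun i => by rw [pow_succ]; ring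

lemma abs_pow_le_abs_q (hq : |q| < 1) {m : ℕ} (hm : 1 ≤ m) : |q ^ m| ≤ |q| := by
  rw [abs_pow]
  calc |q| ^ m ≤ |q| ^ 1 := pow_le_pow_of_le_one (abs_nonneg q) hq.le hm
    _ = |q| := pow_one _

lemma split_pos (hq : |q| < 1) {m : ℕ} (hm : 1 ≤ m) :
    qPochInf (q ^ m) q = (1 - q ^ m) * qPochInf (q ^ (m + 1)) q := by
  have := qPochInf_split hq (abs_pow_le_abs_q hq hm)
  rwa [← pow_succ] at this

lemma split_neg (hq : |q| < 1) {m : ℕ} (hm : 1 ≤ m) :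
    qPochInf (-q ^ m) q = (1 + q ^ m) * qPochInf (-q ^ (m + 1)) q := by
  have ha : |(-q ^ m)| ≤ |q| := by rw [abs_neg]; exact abs_pow_le_abs_q hq hm
  have := qPochInf_split hq ha
  rwa [sub_neg_eq_add, neg_mul, ← pow_succ] at this

lemma abs_tsum_log_le (hq : |q| < 1) {a : ℝ} (ha : |a| ≤ |q|) :
    |∑' i : ℕ, Real.log (1 - a * q ^ i)| ≤ (1 - |q|)⁻¹ * (1 - |q|)⁻¹ := by
  rw [← Real.norm_eq_abs]
  apply tsum_of_norm_bounded ((hasSum_geometric_of_lt_one (abs_nonneg q) hq).mul_left (1 - |q|)⁻¹)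
  intro i
  have hxa : |(-(a * q ^ i))| ≤ |q| := by
    rw [abs_neg, abs_mul, abs_pow]
    calc |a| * |q| ^ i ≤ |q| * 1 :=
          mul_le_mul ha (pow_le_one₀ (abs_nonneg q) hq.le) (by positivity) (abs_nonneg q)
      _ = |q| := mul_one _
  have heq : (1 : ℝ) - a * q ^ i = 1 + -(a * q ^ i) := by ring
  calc ‖Real.log (1 - a * q ^ i)‖ = |Real.log (1 + -(a * q ^ i))| := by rw [heq]; rfl
    _ ≤ |(-(a * q ^ i))| / (1 - |q|) := log_one_add_abs_le hxa hq
    _ ≤ |q| ^ i / (1 - |q|) := by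
        apply div_le_div₀ (by positivity) ?_ (by linarith) le_rfl
        rw [abs_neg, abs_mul, abs_pow]
        calc |a| * |q| ^ i ≤ 1 * |q| ^ i :=
              mul_le_mul_of_nonneg_right (ha.trans hq.le) (by positivity)
          _ = |q| ^ i := one_mul _
    _ = (1 - |q|)⁻¹ * |q| ^ i := by rw [div_eq_inv_mul]

/-- The ratio `(−q^{m+1};q)_∞ / (q^{m+1};q)_∞`. -/
noncomputable def hfun (q : ℝ) (m : ℕ) : ℝ :=
  qPochInf (-q ^ (m + 1)) q / qPochInf (q ^ (m + 1)) q

/-- Uniform bound constant. -/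
noncomputable def Kc (q : ℝ) : ℝ := Real.exp (2 * ((1 - |q|)⁻¹ * (1 - |q|)⁻¹))

lemma Kc_pos : 0 < Kc q := Real.exp_pos _

lemma hfun_bound (hq : |q| < 1) (m : ℕ) : |hfun q m| ≤ Kc q := by
  have h1 : |(-q ^ (m+1))| ≤ |q| := by rw [abs_neg]; exact abs_pow_le_abs_q hq (by omega)
  have h2 : |q ^ (m+1)| ≤ |q| := abs_pow_le_abs_q hq (by omega)
  rw [hfun, qPochInf_exp hq h1, qPochInf_exp hq h2, ← Real.exp_sub, Real.abs_exp, Kc,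
    Real.exp_le_exp]
  have b1 := abs_tsum_log_le hq h1
  have b2 := abs_tsum_log_le hq h2
  have := abs_sub (∑' i : ℕ, Real.log (1 - -q ^ (m+1) * q ^ i))
    (∑' i : ℕ, Real.log (1 - q ^ (m+1) * q ^ i))
  have hle := le_abs_self ((∑' i : ℕ, Real.log (1 - -q ^ (m+1) * q ^ i)) -
    ∑' i : ℕ, Real.log (1 - q ^ (m+1) * q ^ i))
  calc (∑' i : ℕ, Real.log (1 - -q ^ (m+1) * q ^ i)) -
      ∑' i : ℕ, Real.log (1 - q ^ (m+1) * q ^ i)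
      ≤ |∑' i : ℕ, Real.log (1 - -q ^ (m+1) * q ^ i)| +
        |∑' i : ℕ, Real.log (1 - q ^ (m+1) * q ^ i)| := by
        refine hle.trans ?_
        exact (abs_sub _ _)
    _ ≤ 2 * ((1 - |q|)⁻¹ * (1 - |q|)⁻¹) := by linarith

variable (q) in
/-- First summand family. -/
noncomputable def Af (k j : ℕ) : ℝ := q ^ (k * (k + j)) / (1 - q ^ (k + j)) * hfun q (k + j)

variable (q) in
noncomputable def Bf (k j : ℕ) : ℝ :=
  q ^ ((k + 1) * (k + j + 1)) / (1 - q ^ (k + j + 1)) * hfun q (k + j + 1)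

variable (q) in
noncomputable def Cf (k j : ℕ) : ℝ := q ^ (k * (k + j)) * hfun q (k + j)

variable (q) in
noncomputable def vf (k j : ℕ) : ℝ := q ^ (k * (k + j) + 2 * k) * hfun q (k + j)

lemma one_sub_abs_le (hq : |q| < 1) {m : ℕ} (hm : 1 ≤ m) : 1 - |q| ≤ |1 - q ^ m| := by
  have h1 : |q ^ m| ≤ |q| := abs_pow_le_abs_q hq hm
  calc 1 - |q| ≤ 1 - |q ^ m| := by linarith
    _ = |(1:ℝ)| - |q ^ m| := by rw [abs_one]
    _ ≤ |1 - q ^ m| := abs_sub_abs_le_abs_sub 1 (q ^ m)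

lemma pow_exp_le (hq : |q| < 1) {c e : ℕ} (h : c ≤ e) : |q| ^ e ≤ |q| ^ c :=
  pow_le_pow_of_le_one (abs_nonneg q) hq.le h

lemma div_term_bound (hq : |q| < 1) {e m : ℕ} (hm : 1 ≤ m) {c : ℕ} (hce : c ≤ e) :
    |q ^ e / (1 - q ^ m)| ≤ |q| ^ c / (1 - |q|) := by
  rw [abs_div, abs_pow]
  exact div_le_div₀ (by positivity) (pow_exp_le hq hce) (by linarith) (one_sub_abs_le hq hm)

lemma abs_Af_le (hq : |q| < 1) {k : ℕ} (hk : 1 ≤ k) (j : ℕ) :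
    |Af q k j| ≤ Kc q / (1 - |q|) * (|q| ^ k) ^ j := by
  rw [Af, abs_mul]
  calc |q ^ (k * (k + j)) / (1 - q ^ (k + j))| * |hfun q (k + j)|
      ≤ |q| ^ (k * j) / (1 - |q|) * Kc q := by
        apply mul_le_mul (div_term_bound hq (by omega) (Nat.mul_le_mul_left k (by omega)))
          (hfun_bound hq _) (abs_nonneg _) (div_nonneg (by positivity) (by linarith))
    _ = Kc q / (1 - |q|) * (|q| ^ k) ^ j := by rw [← pow_mul]; ring

lemma abs_Bf_le (hq : |q| < 1) {k : ℕ} (hk : 1 ≤ k) (j : ℕ) :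
    |Bf q k j| ≤ Kc q / (1 - |q|) * (|q| ^ k) ^ j := by
  rw [Bf, abs_mul]
  have hce : k * j ≤ (k + 1) * (k + j + 1) :=
    Nat.mul_le_mul (by omega) (by omega)
  calc |q ^ ((k+1) * (k + j + 1)) / (1 - q ^ (k + j + 1))| * |hfun q (k + j + 1)|
      ≤ |q| ^ (k * j) / (1 - |q|) * Kc q := by
        apply mul_le_mul (div_term_bound hq (by omega) hce)
          (hfun_bound hq _) (abs_nonneg _) (div_nonneg (by positivity) (by linarith))
    _ = Kc q / (1 - |q|) * (|q| ^ k) ^ j := by rw [← pow_mul]; ring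

lemma abs_Cf_le (hq : |q| < 1) {k : ℕ} (hk : 1 ≤ k) (j : ℕ) :
    |Cf q k j| ≤ Kc q * (|q| ^ k) ^ j := by
  rw [Cf, abs_mul, abs_pow]
  calc |q| ^ (k * (k + j)) * |hfun q (k + j)|
      ≤ |q| ^ (k * j) * Kc q := by
        apply mul_le_mul (pow_exp_le hq (Nat.mul_le_mul_left k (by omega)))
          (hfun_bound hq _) (abs_nonneg _) (by positivity)
    _ = Kc q * (|q| ^ k) ^ j := by rw [← pow_mul]; ring

lemma abs_vf_le (hq : |q| < 1) {k : ℕ} (hk : 1 ≤ k) (j : ℕ) :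
    |vf q k j| ≤ Kc q * (|q| ^ k) ^ j := by
  rw [vf, abs_mul, abs_pow]
  calc |q| ^ (k * (k + j) + 2 * k) * |hfun q (k + j)|
      ≤ |q| ^ (k * j) * Kc q := by
        apply mul_le_mul (pow_exp_le hq (by nlinarith [Nat.mul_le_mul_left k (show j ≤ k + j by omega)]))
          (hfun_bound hq _) (abs_nonneg _) (by positivity)
    _ = Kc q * (|q| ^ k) ^ j := by rw [← pow_mul]; ring

lemma geom_summable (hq : |q| < 1) {k : ℕ} (hk : 1 ≤ k) (M : ℝ) :
    Summable (fun j : ℕ => M * (|q| ^ k) ^ j) := by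
  have h0 : (0:ℝ) ≤ |q| ^ k := by positivity
  have h1 : |q| ^ k < 1 := pow_lt_one₀ (abs_nonneg q) hq (by omega)
  exact (summable_geometric_of_lt_one h0 h1).mul_left M

lemma summable_Af (hq : |q| < 1) {k : ℕ} (hk : 1 ≤ k) : Summable (Af q k) :=
  Summable.of_norm_bounded (geom_summable hq hk _) (abs_Af_le hq hk)

lemma summable_Bf (hq : |q| < 1) {k : ℕ} (hk : 1 ≤ k) : Summable (Bf q k) :=
  Summable.of_norm_bounded (geom_summable hq hk _) (abs_Bf_le hq hk)

lemma summable_Cf (hq : |q| < 1) {k : ℕ} (hk : 1 ≤ k) : Summable (Cf q k) :=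
  Summable.of_norm_bounded (geom_summable hq hk _) (abs_Cf_le hq hk)

lemma pow_ne_one (hq : |q| < 1) {m : ℕ} (hm : 1 ≤ m) : (1:ℝ) - q ^ m ≠ 0 := by
  have h1 : |q ^ m| < 1 := by
    rw [abs_pow]; exact pow_lt_one₀ (abs_nonneg q) hq (by omega)
  have h2 := (abs_lt.1 h1).2
  intro h
  have : q ^ m = 1 := by linarith
  rw [this] at h2; linarith

lemma tele_eq (hq : |q| < 1) {k : ℕ} (hk : 1 ≤ k) (j : ℕ) :
    vf q k j - vf q k (j + 1) = (1 + q ^ k) * Bf q k j + (1 - q ^ (2 * k)) * Cf q k (j + 1)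
      - (1 - q ^ k) * Af q k (j + 1) := by
  have hd : (1:ℝ) - q ^ (k + j + 1) ≠ 0 := pow_ne_one hq (by omega)
  have hh : hfun q (k + j) = (1 + q ^ (k + j + 1)) / (1 - q ^ (k + j + 1)) * hfun q (k + j + 1) := by
    rw [hfun, split_neg hq (show 1 ≤ k + j + 1 by omega), split_pos hq (show 1 ≤ k + j + 1 by omega),
      mul_div_mul_comm]
    rfl
  rw [Af, Bf, Cf, vf, vf]
  have n1 : k + (j + 1) = k + j + 1 := by omega
  rw [n1, hh]
  have e3 : k * (k + j + 1) + 2 * k = k * (k + j) + k + k + k := by ring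
  have e2 : (k + 1) * (k + j + 1) = k * (k + j) + k + (k + j + 1) := by ring
  have e1 : k * (k + j + 1) = k * (k + j) + k := by ring
  have e4 : k * (k + j) + 2 * k = k * (k + j) + k + k := by ring
  have e5 : 2 * k = k + k := by ring
  rw [e3, e2, e1, e4, e5]
  simp only [pow_add, pow_one]
  have hd2 : (1:ℝ) - q ^ k * q ^ j * q ≠ 0 := by
    have hqq : q ^ k * q ^ j * q = q ^ (k + j + 1) := by
      rw [pow_add, pow_add, pow_one]
    rw [hqq]; exact hd
  field_simp [hd2]
  ring

lemma left_eq (hq : |q| < 1) {k : ℕ} (hk : 1 ≤ k) :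
    (1 - q ^ k) * Af q k 0 - (1 - q ^ (2 * k)) * Cf q k 0 = vf q k 0 := by
  have hd : (1:ℝ) - q ^ k ≠ 0 := pow_ne_one hq hk
  rw [Af, Cf, vf]
  simp only [Nat.add_zero]
  have e5 : 2 * k = k + k := by ring
  rw [e5]
  simp only [pow_add]
  field_simp
  ring

end Main

theorem q_series_identity (k : ℕ) (hk : 1 ≤ k) (q : ℝ) (hq : |q| < 1) :
    (1 - q ^ k) * ∑' j : ℕ,
        q ^ (k * (k + j)) * qPochInf (-q ^ (k + j + 1)) q / qPochInf (q ^ (k + j)) q -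
      (1 + q ^ k) * ∑' j : ℕ,
        q ^ ((k + 1) * (k + j + 1)) * qPochInf (-q ^ (k + j + 2)) q /
          qPochInf (q ^ (k + j + 1)) q =
    (1 - q ^ (2 * k)) * ∑' j : ℕ,
        q ^ (k * (k + j)) * qPochInf (-q ^ (k + j + 1)) q / qPochInf (q ^ (k + j + 1)) q := by
  -- rewrite the three sums
  have g1 : (∑' j : ℕ, q ^ (k * (k + j)) * qPochInf (-q ^ (k + j + 1)) q
      / qPochInf (q ^ (k + j)) q) = ∑' j : ℕ, Af q k j := by
    refine tsum_congr fun j => ?_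
    rw [Af, hfun, split_pos hq (show 1 ≤ k + j by omega), mul_div_mul_comm]
  have g2 : (∑' j : ℕ, q ^ ((k + 1) * (k + j + 1)) * qPochInf (-q ^ (k + j + 2)) q
      / qPochInf (q ^ (k + j + 1)) q) = ∑' j : ℕ, Bf q k j := by
    refine tsum_congr fun j => ?_
    rw [Bf, hfun, split_pos hq (show 1 ≤ k + j + 1 by omega), mul_div_mul_comm]
  have g3 : (∑' j : ℕ, q ^ (k * (k + j)) * qPochInf (-q ^ (k + j + 1)) q
      / qPochInf (q ^ (k + j + 1)) q) = ∑' j : ℕ, Cf q k j := by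
    refine tsum_congr fun j => ?_
    rw [Cf, hfun, mul_div_assoc]
  rw [g1, g2, g3]
  -- summability
  have sA := summable_Af hq hk
  have sB := summable_Bf hq hk
  have sC := summable_Cf hq hk
  have sA' : Summable fun j : ℕ => Af q k (j + 1) := (summable_nat_add_iff 1).2 sA
  have sC' : Summable fun j : ℕ => Cf q k (j + 1) := (summable_nat_add_iff 1).2 sC
  -- telescoping
  have hr0 : (0:ℝ) ≤ |q| ^ k := by positivity
  have hr1 : |q| ^ k < 1 := pow_lt_one₀ (abs_nonneg q) hq (by omega)
  have hv0 : Filter.Tendsto (vf q k) Filter.atTop (nhds 0) := by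
    apply squeeze_zero_norm (abs_vf_le hq hk)
    have := (tendsto_pow_atTop_nhds_zero_of_lt_one hr0 hr1).const_mul (Kc q)
    simpa using this
  have hnorm : Summable fun j : ℕ => ‖vf q k j - vf q k (j + 1)‖ := by
    apply Summable.of_norm_bounded (geom_summable hq hk (2 * Kc q))
    intro j
    rw [norm_norm]
    calc ‖vf q k j - vf q k (j + 1)‖ ≤ ‖vf q k j‖ + ‖vf q k (j + 1)‖ := norm_sub_le _ _
      _ ≤ Kc q * (|q| ^ k) ^ j + Kc q * (|q| ^ k) ^ (j + 1) :=
          add_le_add (abs_vf_le hq hk j) (abs_vf_le hq hk (j + 1))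
      _ ≤ 2 * Kc q * (|q| ^ k) ^ j := by
          have h1 : (|q| ^ k) ^ (j + 1) ≤ (|q| ^ k) ^ j := by
            rw [pow_succ]
            nlinarith [pow_nonneg hr0 j]
          nlinarith [Kc_pos (q := q), pow_nonneg hr0 j]
  have htel : HasSum (fun j : ℕ => vf q k j - vf q k (j + 1)) (vf q k 0) := by
    rw [hasSum_iff_tendsto_nat_of_summable_norm hnorm]
    have heq : ∀ n : ℕ, ∑ i ∈ Finset.range n, (vf q k i - vf q k (i + 1))
        = vf q k 0 - vf q k n := fun n => Finset.sum_range_sub' (vf q k) n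
    simp only [heq]
    simpa using tendsto_const_nhds.sub hv0
  have h2 : (∑' j : ℕ, ((1 + q ^ k) * Bf q k j + (1 - q ^ (2 * k)) * Cf q k (j + 1)
      - (1 - q ^ k) * Af q k (j + 1))) = vf q k 0 := by
    rw [← tsum_congr (tele_eq hq hk)]
    exact htel.tsum_eq
  rw [Summable.tsum_sub ((sB.mul_left _).add (sC'.mul_left _)) (sA'.mul_left _),
    Summable.tsum_add (sB.mul_left _) (sC'.mul_left _), tsum_mul_left, tsum_mul_left, tsum_mul_left] at h2
  have hA0 : (∑' j : ℕ, Af q k j) = Af q k 0 + ∑' j : ℕ, Af q k (j + 1) := Summable.tsum_eq_zero_add sA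
  have hC0 : (∑' j : ℕ, Cf q k j) = Cf q k 0 + ∑' j : ℕ, Cf q k (j + 1) := Summable.tsum_eq_zero_add sC
  have hL := left_eq hq hk
  rw [hA0, hC0]
  linear_combination hL - h2
end
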